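/- arXiv:2012.15669 — 6 statements merged into one kernel-verified Lean document; each statement's English description precedes it below -/
import Mathlib

section
/- Let K be a number field of degree n with an integral basis ω. Then there exist an 𝓞_K^×-fundamental domain 𝒟 ⊆ 𝓞_K∖{0} and a constant C > 0 such that C·‖α‖_{∞,ω}ⁿ ≤ 𝐍(α) for every α ∈ 𝒟; that is, there exists an NL-compatible 𝓞_K^×-fundamental domain. -/
open NumberField

/-- The `ℓ∞`-length `‖x‖_{∞,ω} = maxᵢ |aᵢ|` of `x = ∑ᵢ aᵢ ωᵢ`. -/
noncomputable def lInftyLen {K : Type*} [Field K] [NumberField K] {ι : Type*} [Fintype ι]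
    (ω : Module.Basis ι ℤ (RingOfIntegers K)) (x : RingOfIntegers K) : ℕ :=
  Finset.univ.sup fun i => (ω.repr x i).natAbs

/-!
Every nonzero `α ∈ 𝓞_K` has a unit multiple whose mixed embedding lies in Mathlib's
`fundamentalCone`, and units act freely on nonzero integers, so choosing one such multiple per
unit orbit gives a fundamental domain. On the cone, the part of norm at most one is bounded, so
by homogeneity `‖x‖ⁿ ≤ C·N(x)`; and the `ω`-coordinates of `α` are the coordinates of its mixed
embedding in the `ℝ`-basis of the mixed space given by `ω`, hence `‖α‖_{∞,ω} ≤ C'·‖x‖`.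
-/

section

open Module

theorem MulAction.exists_subset_existsUnique_inv_smul_mem {G X : Type*} [Group G] [MulAction G X]
    {S : Set X}
    (hfree : ∀ x ∈ S, ∀ g : G, g • x = x → g = 1) :
    ∃ D ⊆ S, ∀ x : X, (∃ g : G, g • x ∈ S) → ∃! g : G, g⁻¹ • x ∈ D := by
  classical
  let rep : orbitRel.Quotient G X → X := fun q =>
    if h : (S ∩ Quotient.mk _ ⁻¹' {q}).Nonempty then h.some else q.out
  have rep_spec : ∀ x (g : G), g • x ∈ S →
      rep ⟦x⟧ ∈ S ∧ (⟦rep ⟦x⟧⟧ : orbitRel.Quotient G X) = ⟦x⟧ := by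
    intro x g hg
    have h : (S ∩ Quotient.mk _ ⁻¹' {(⟦x⟧ : orbitRel.Quotient G X)}).Nonempty :=
      ⟨g • x, hg, Quotient.sound (mem_orbit x g)⟩
    simp only [rep, dif_pos h]
    exact ⟨h.some_mem.1, h.some_mem.2⟩
  refine ⟨{y | y ∈ S ∧ rep ⟦y⟧ = y}, fun y hy => hy.1, fun x ⟨g, hg⟩ => ?_⟩
  obtain ⟨hS, hq⟩ := rep_spec x g hg
  obtain ⟨h, hh : h • x = rep ⟦x⟧⟩ := Quotient.exact hq
  refine ⟨h⁻¹, ?_, fun k ⟨_, hk⟩ => ?_⟩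
  · simp only [Set.mem_ofPred_eq, inv_inv, hh, hq, and_true]
    exact hS
  · rw [Quotient.sound (mem_orbit x k⁻¹), ← hh] at hk
    have : k⁻¹ * h⁻¹ = 1 := hfree _ (hh ▸ hS) _ (by rw [mul_smul, inv_smul_smul, hk])
    simpa using inv_eq_of_mul_eq_one_right this

theorem Module.Basis.exists_abs_repr_le {ι E : Type*} [Fintype ι] [NormedAddCommGroup E]
    [NormedSpace ℝ E] (b : Basis ι ℝ E) :
    ∃ C : ℝ, 0 < C ∧ ∀ x i, |b.repr x i| ≤ C * ‖x‖ := by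
  refine ⟨‖(b.equivFunL : E →L[ℝ] ι → ℝ)‖ + 1, by positivity, fun x i => ?_⟩
  calc |b.repr x i| = ‖b.equivFunL x i‖ := rfl
    _ ≤ ‖(b.equivFunL : E →L[ℝ] ι → ℝ) x‖ := norm_le_pi_norm _ i
    _ ≤ ‖(b.equivFunL : E →L[ℝ] ι → ℝ)‖ * ‖x‖ := ContinuousLinearMap.le_opNorm _ _
    _ ≤ _ := by gcongr; linarith

theorem lInftyLen_le {K : Type*} [Field K] [NumberField K] {ι : Type*} [Fintype ι]
    {ω : Basis ι ℤ (𝓞 K)} {x : 𝓞 K} {r : ℝ} (hr : 0 ≤ r)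
    (h : ∀ i, |(ω.repr x i : ℝ)| ≤ r) : (lInftyLen ω x : ℝ) ≤ r :=
  (Nat.le_floor_iff hr).mp <| Finset.sup_le fun i _ =>
    Nat.le_floor <| by rw [Nat.cast_natAbs, Int.cast_abs]; exact h i

namespace NumberField.mixedEmbedding

variable {K : Type*} [Field K] [NumberField K]

variable (K) in
noncomputable def integerLatticeEquiv : 𝓞 K ≃ₗ[ℤ] mixedEmbedding.integerLattice K :=
  LinearEquiv.ofInjective _ ((mixedEmbedding_injective K).comp RingOfIntegers.coe_injective)

open scoped Classical in
theorem exists_abs_repr_le_norm {ι : Type*} [Fintype ι] (ω : Basis ι ℤ (𝓞 K)) :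
    ∃ C : ℝ, 0 < C ∧ ∀ (β : 𝓞 K) i, |(ω.repr β i : ℝ)| ≤ C * ‖mixedEmbedding K β‖ := by
  let b := (ω.map (integerLatticeEquiv K)).ofZLatticeBasis ℝ (mixedEmbedding.integerLattice K)
  obtain ⟨C, hC, hb⟩ := b.exists_abs_repr_le
  refine ⟨C, hC, fun β i => ?_⟩
  have : b.repr (integerLatticeEquiv K β) i = ω.repr β i := by
    rw [Basis.ofZLatticeBasis_repr_apply, Basis.map_repr, LinearEquiv.trans_apply,
      LinearEquiv.symm_apply_apply]
  rw [← this]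
  exact hb _ i

theorem norm_mixedEmbedding_eq_natAbs_norm (α : 𝓞 K) :
    mixedEmbedding.norm (mixedEmbedding K α) = (Algebra.norm ℤ α).natAbs := by
  rw [norm_eq_norm, Nat.cast_natAbs, ← Algebra.coe_norm_int]
  push_cast
  rfl

namespace fundamentalCone

variable (K) in
open scoped Classical in
theorem exists_norm_pow_le :
    ∃ C : ℝ, 0 < C ∧ ∀ x : mixedSpace K, x ∈ fundamentalCone K →
      ‖x‖ ^ finrank ℚ K ≤ C * mixedEmbedding.norm x := by
  obtain ⟨R, hR⟩ := isBounded_iff_forall_norm_le.mp (isBounded_normLeOne K)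
  set n := finrank ℚ K
  refine ⟨max R 1 ^ n, by positivity, fun x hx => ?_⟩
  have hN := norm_pos_of_mem hx
  set s := (mixedEmbedding.norm x ^ (n⁻¹ : ℝ))⁻¹
  have hs : 0 < s := by positivity
  have hsn : s ^ n = (mixedEmbedding.norm x)⁻¹ := by
    rw [inv_pow, Real.rpow_inv_natCast_pow hN.le finrank_pos.ne']
  have hsx : s • x ∈ normLeOne K := by
    refine ⟨smul_mem_of_mem hx hs.ne', ?_⟩
    rw [Set.mem_ofPred_eq, mixedEmbedding.norm_smul, abs_of_pos hs, hsn, inv_mul_cancel₀ hN.ne']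
  have : (mixedEmbedding.norm x)⁻¹ * ‖x‖ ^ n ≤ max R 1 ^ n := by
    rw [← hsn, ← mul_pow, ← Real.norm_of_nonneg hs.le, ← _root_.norm_smul]
    gcongr
    exact (hR _ hsx).trans (le_max_left _ _)
  rwa [inv_mul_le_iff₀ hN, mul_comm] at this

theorem ne_zero_of_mixedEmbedding_mem {α : 𝓞 K} (hα : mixedEmbedding K α ∈ fundamentalCone K) :
    α ≠ 0 := by
  rintro rfl
  simpa using norm_pos_of_mem hα

theorem exists_unit_mul_mixedEmbedding_mem {α : 𝓞 K} (hα : α ≠ 0) :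
    ∃ u : (𝓞 K)ˣ, mixedEmbedding K (u * α : 𝓞 K) ∈ fundamentalCone K := by
  have : mixedEmbedding.norm (mixedEmbedding K α) ≠ 0 := by
    rw [norm_mixedEmbedding_eq_natAbs_norm]
    simpa using hα
  obtain ⟨u, hu⟩ := exists_unit_smul_mem this
  rw [unit_smul_eq_iff_mul_eq.mpr rfl] at hu
  exact ⟨u, hu⟩

theorem eq_one_of_unit_smul_eq {α : 𝓞 K} (hα : mixedEmbedding K α ∈ fundamentalCone K)
    {u : (𝓞 K)ˣ} (hu : u • α = α) : u = 1 := by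
  rw [Units.smul_def, smul_eq_mul, mul_eq_right₀ (ne_zero_of_mixedEmbedding_mem hα)] at hu
  exact Units.val_eq_one.mp hu

theorem exists_mul_lInftyLen_pow_le {ι : Type*} [Fintype ι] (ω : Basis ι ℤ (𝓞 K)) :
    ∃ C : ℝ, 0 < C ∧ ∀ α : 𝓞 K, mixedEmbedding K α ∈ fundamentalCone K →
      C * (lInftyLen ω α : ℝ) ^ Fintype.card ι ≤ (Algebra.norm ℤ α).natAbs := by
  classical
  obtain ⟨C₁, hC₁, hcone⟩ := exists_norm_pow_le K
  obtain ⟨C₂, hC₂, hcoef⟩ := exists_abs_repr_le_norm ω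
  have hn : Fintype.card ι = finrank ℚ K :=
    (finrank_eq_card_basis ω).symm.trans (RingOfIntegers.rank K)
  refine ⟨(C₂ ^ Fintype.card ι * C₁)⁻¹, by positivity, fun α hα => ?_⟩
  rw [inv_mul_le_iff₀ (by positivity), ← norm_mixedEmbedding_eq_natAbs_norm]
  calc (lInftyLen ω α : ℝ) ^ Fintype.card ι
      ≤ (C₂ * ‖mixedEmbedding K α‖) ^ Fintype.card ι := by
        gcongr
        exact lInftyLen_le (by positivity) (hcoef α)
    _ = C₂ ^ Fintype.card ι * ‖mixedEmbedding K α‖ ^ finrank ℚ K := by rw [mul_pow, hn]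
    _ ≤ C₂ ^ Fintype.card ι * (C₁ * mixedEmbedding.norm (mixedEmbedding K α)) := by
        gcongr
        exact hcone _ hα
    _ = _ := by ring

end fundamentalCone

end NumberField.mixedEmbedding

end

/-- **Existence of an NL-compatible `𝓞_K^×`-fundamental domain.**
There is a fundamental domain `D` for the multiplication action of the unit group on
`𝓞_K ∖ {0}` together with a constant `C > 0` such that `C·‖α‖_{∞,ω}ⁿ ≤ 𝐍(α)` on `D`. -/
theorem exists_NL_compatible_fundamental_domain
    {K : Type*} [Field K] [NumberField K]
    {ι : Type*} [Fintype ι] (ω : Module.Basis ι ℤ (RingOfIntegers K)) :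
    ∃ D : Set (RingOfIntegers K),
      (∀ α ∈ D, α ≠ 0) ∧
      (∀ α : RingOfIntegers K, α ≠ 0 →
        ∃! η : (RingOfIntegers K)ˣ,
          ((η⁻¹ : (RingOfIntegers K)ˣ) : RingOfIntegers K) * α ∈ D) ∧
      ∃ C : ℝ, 0 < C ∧
        ∀ α ∈ D,
          C * (lInftyLen ω α : ℝ) ^ Fintype.card ι ≤ ((Algebra.norm ℤ α).natAbs : ℝ) := by
  open NumberField.mixedEmbedding fundamentalCone in
  obtain ⟨D, hDS, hD⟩ := MulAction.exists_subset_existsUnique_inv_smul_mem (G := (𝓞 K)ˣ)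
    (S := {α : 𝓞 K | mixedEmbedding K α ∈ fundamentalCone K})
    fun _ hα _ hu => eq_one_of_unit_smul_eq hα hu
  obtain ⟨C, hC, hCD⟩ := exists_mul_lInftyLen_pow_le ω
  exact ⟨D, fun α hα => ne_zero_of_mixedEmbedding_mem (hDS hα),
    fun α hα => hD α (exists_unit_mul_mixedEmbedding_mem hα), C, hC, fun α hα => hCD α (hDS hα)⟩
end

section
/- Let K be a number field whose unit group 𝓞_K^× is infinite, and let S ⊆ 𝓞_K be a finite subset with #S ≥ 3. Then there exists an 𝓞_K^×-fundamental domain 𝒟 ⊆ 𝓞_K∖{0} containing no S-constellation: there do not exist α ∈ 𝓞_K and a positive integer k with α + k·s ∈ 𝒟 for all s ∈ S. -/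
/-!
Fix an infinite place `w` and a unit `u` with `λ := w u > 1`; multiplying by powers of `u` moves
any nonzero element into any window `[λ ^ n, λ ^ (n + 1))`. Given `M`, enumerate the associate
classes and pick in the `m`-th class a representative in the window of exponent `(N + 1) * m`,
where `λ ^ N > M`: the resulting fundamental domain has elements of pairwise `M`-separated sizes.
Three points `xᵢ = α + k tᵢ` of a constellation satisfy
`(t₂ - t₃) x₁ + (t₃ - t₁) x₂ + (t₁ - t₂) x₃ = 0`, and for `M` large in terms of the coefficients
the largest of the three terms cannot be cancelled by the other two.
-/

open NumberField Finset

namespace Associates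

variable {R : Type*}

def transversal [MonoidWithZero R] (r : Associates R → R) : Set R :=
  {x | x ≠ 0 ∧ r (Associates.mk x) = x}

theorem mk_injOn_transversal [MonoidWithZero R] {r : Associates R → R} :
    Set.InjOn Associates.mk (transversal r) :=
  fun x hx y hy hxy => by rw [← hx.2, ← hy.2, hxy]

theorem existsUnique_inv_mul_mem_transversal [CommMonoidWithZero R] [IsCancelMulZero R]
    {r : Associates R → R} (hr : ∀ a, Associates.mk (r a) = a) {α : R} (hα : α ≠ 0) :
    ∃! η : Rˣ, ((η⁻¹ : Rˣ) : R) * α ∈ transversal r := by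
  have hmk : ∀ η : Rˣ, Associates.mk ((η⁻¹ : Rˣ) * α) = Associates.mk α := fun η =>
    mk_eq_mk_iff_associated.2 (associated_unit_mul_left α _ (Units.isUnit _))
  obtain ⟨μ, hμ⟩ := mk_eq_mk_iff_associated.1 (hr (Associates.mk α))
  have hμα : ((μ⁻¹ : Rˣ) : R) * α = r (Associates.mk α) := by
    rw [mul_comm]
    exact (Units.mul_inv_eq_iff_eq_mul μ).2 hμ.symm
  refine ⟨μ, ⟨(Units.mul_right_eq_zero _).not.2 hα, by rw [hmk, hμα]⟩, fun η hη => ?_⟩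
  have : ((η⁻¹ : Rˣ) : R) * α = (μ⁻¹ : Rˣ) * α := by rw [hμα, ← hη.2, hmk]
  exact inv_injective (Units.ext (mul_right_cancel₀ hα this))

end Associates

namespace AbsoluteValue

variable {R ι : Type*}

section Ring

variable [Ring R] (v : AbsoluteValue R ℝ) [DecidableEq ι]

theorem sum_mul_ne_zero_of_dominant {s : Finset ι} {c x : ι → R} {i : ι} {M : ℝ}
    (hi : i ∈ s) (hx : x i ≠ 0) (hc : ∑ j ∈ s.erase i, v (c j) < M * v (c i))
    (hdom : ∀ j ∈ s.erase i, M * v (x j) ≤ v (x i)) : ∑ j ∈ s, c j * x j ≠ 0 := by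
  intro hsum
  have hM : 0 < M :=
    pos_of_mul_pos_left ((sum_nonneg fun j _ => v.nonneg _).trans_lt hc) (v.nonneg _)
  have hrel : c i * x i = -∑ j ∈ s.erase i, c j * x j := by
    rw [← add_sum_erase s _ hi] at hsum
    exact eq_neg_of_add_eq_zero_left hsum
  have hbound : M * (v (c i) * v (x i)) ≤ (∑ j ∈ s.erase i, v (c j)) * v (x i) := calc
    M * (v (c i) * v (x i)) = M * v (∑ j ∈ s.erase i, c j * x j) := by
      rw [← v.map_mul, hrel, v.map_neg]
    _ ≤ M * ∑ j ∈ s.erase i, v (c j) * v (x j) := by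
      gcongr
      simpa only [v.map_mul] using v.sum_le (s.erase i) fun j => c j * x j
    _ = ∑ j ∈ s.erase i, v (c j) * (M * v (x j)) := by
      rw [mul_sum]
      exact sum_congr rfl fun j _ => mul_left_comm _ _ _
    _ ≤ ∑ j ∈ s.erase i, v (c j) * v (x i) := by
      gcongr with j hj
      exact hdom j hj
    _ = _ := (sum_mul ..).symm
  have := mul_lt_mul_of_pos_right hc (v.pos hx)
  linarith

theorem sum_mul_ne_zero_of_pairwise_separated [Fintype ι] [Nonempty ι] {c x : ι → R} {M : ℝ}
    (hM : 1 ≤ M) (hc : ∀ i, ∑ j ∈ univ.erase i, v (c j) < M * v (c i)) (hx : ∀ i, x i ≠ 0)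
    (hsep : Pairwise fun i j => M * v (x i) < v (x j) ∨ M * v (x j) < v (x i)) :
    ∑ i, c i * x i ≠ 0 := by
  obtain ⟨i, hi⟩ := Finite.exists_max fun i => v (x i)
  refine v.sum_mul_ne_zero_of_dominant (mem_univ i) (hx i) (hc i) fun j hj => ?_
  rcases hsep (ne_of_mem_erase hj) with h | h
  · exact h.le
  · nlinarith [hi j, v.nonneg (x i)]

theorem exists_one_le_and_sum_erase_lt [Fintype ι] {c : ι → R} (hc : ∀ i, c i ≠ 0) :
    ∃ M : ℝ, 1 ≤ M ∧ ∀ i, ∑ j ∈ univ.erase i, v (c j) < M * v (c i) :=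
  ((Filter.eventually_ge_atTop 1).and (Filter.eventually_all.2 fun i =>
    (Filter.tendsto_id.atTop_mul_const (v.pos (hc i))).eventually_gt_atTop _)).exists

end Ring

section Semiring

variable [Semiring R] [Nontrivial R] (v : AbsoluteValue R ℝ)

theorem map_units_zpow (u : Rˣ) (n : ℤ) : v ↑(u ^ n) = v u ^ n := by
  have := congrArg Units.val (map_zpow (Units.map (v : R →* ℝ)) u n)
  rw [Units.val_zpow_eq_zpow_val] at this
  exact this

theorem exists_unit_mul_mem_Ico {u : Rˣ} (hu : 1 < v u) {x : R} (hx : x ≠ 0) (n : ℤ) :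
    ∃ η : Rˣ, v (η * x) ∈ Set.Ico (v u ^ n) (v u ^ (n + 1)) := by
  obtain ⟨m, hm⟩ := exists_mem_Ico_zpow (v.pos hx) hu
  refine ⟨u ^ (n - m), ?_⟩
  rw [v.map_mul, v.map_units_zpow]
  constructor
  · calc v u ^ n = v u ^ (n - m) * v u ^ m := by rw [← zpow_add₀ (by positivity)]; ring_nf
      _ ≤ _ := by gcongr; exact hm.1
  · calc _ < v u ^ (n - m) * v u ^ (m + 1) := by gcongr; exact hm.2
      _ = v u ^ (n + 1) := by rw [← zpow_add₀ (by positivity)]; ring_nf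

end Semiring

theorem exists_fundamental_domain_pairwise_separated [CommSemiring R] [IsDomain R] [Countable R]
    (v : AbsoluteValue R ℝ) {u : Rˣ} (hu : 1 < v u) (M : ℝ) :
    ∃ D : Set R, (∀ α ∈ D, α ≠ 0) ∧ (∀ α : R, α ≠ 0 → ∃! η : Rˣ, ((η⁻¹ : Rˣ) : R) * α ∈ D) ∧
      D.Pairwise fun x y => M * v x < v y ∨ M * v y < v x := by
  have : Countable (Associates R) := Associates.mk_surjective.countable
  obtain ⟨ι, hι⟩ := Countable.exists_injective_nat (Associates R)
  obtain ⟨N, hN⟩ := pow_unbounded_of_one_lt M hu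
  let e : Associates R → ℤ := fun a => (N + 1) * ι a
  have hrep : ∀ a : Associates R, ∃ x, Associates.mk x = a ∧
      (a ≠ 0 → v x ∈ Set.Ico (v u ^ e a) (v u ^ (e a + 1))) := by
    intro a
    obtain ⟨x, rfl⟩ := Associates.mk_surjective a
    by_cases hx : x = 0
    · exact ⟨x, rfl, fun h => (h (by rw [hx, Associates.mk_zero])).elim⟩
    · obtain ⟨η, hη⟩ := v.exists_unit_mul_mem_Ico hu hx (e (Associates.mk x))
      exact ⟨η * x, Associates.mk_eq_mk_iff_associated.2
        (associated_unit_mul_left _ _ η.isUnit), fun _ => hη⟩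
  choose r hr hrv using hrep
  have hsize : ∀ x ∈ Associates.transversal r,
      v x ∈ Set.Ico (v u ^ e (Associates.mk x)) (v u ^ (e (Associates.mk x) + 1)) :=
    fun x hx => by simpa only [hx.2] using hrv _ (Associates.mk_ne_zero.2 hx.1)
  have hlt : ∀ x ∈ Associates.transversal r, ∀ y ∈ Associates.transversal r,
      ι (Associates.mk x) < ι (Associates.mk y) → M * v x < v y := by
    intro x hx y hy h
    have he : e (Associates.mk x) + 1 + N ≤ e (Associates.mk y) := by
      have : (ι (Associates.mk x) : ℤ) + 1 ≤ ι (Associates.mk y) := by exact_mod_cast h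
      simp only [e]
      nlinarith
    calc M * v x < v u ^ N * v x := by gcongr; exact v.pos hx.1
      _ ≤ v u ^ (N : ℤ) * v u ^ (e (Associates.mk x) + 1) := by
        rw [zpow_natCast]; gcongr; exact (hsize x hx).2.le
      _ = v u ^ (e (Associates.mk x) + 1 + N) := by
        rw [← zpow_add₀ (by positivity), add_comm (N : ℤ)]
      _ ≤ v u ^ e (Associates.mk y) := zpow_le_zpow_right₀ hu.le he
      _ ≤ v y := (hsize y hy).1
  refine ⟨Associates.transversal r, fun _ h => h.1,
    fun α hα => Associates.existsUnique_inv_mul_mem_transversal hr hα, ?_⟩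
  intro x hx y hy hxy
  rcases lt_or_gt_of_ne (hι.ne (Associates.mk_injOn_transversal.ne hx hy hxy)) with h | h
  exacts [Or.inl (hlt x hx y hy h), Or.inr (hlt y hy x hx h)]

end AbsoluteValue

instance NumberField.RingOfIntegers.countable {K : Type*} [Field K] [NumberField K] :
    Countable (𝓞 K) :=
  Finsupp.Countable.of_moduleFinite (R := ℤ)

theorem NumberField.Units.exists_one_lt_of_infinite {K : Type*} [Field K] [NumberField K]
    (h : Infinite (𝓞 K)ˣ) : ∃ (w : InfinitePlace K) (u : (𝓞 K)ˣ), 1 < w u := by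
  obtain ⟨u, hu⟩ : ∃ u : (𝓞 K)ˣ, u ∉ torsion K := by
    by_contra! hall
    exact not_finite_iff_infinite.2 h <| Finite.of_injective
      (fun u => (⟨u, hall u⟩ : torsion K)) fun _ _ huv => congrArg Subtype.val huv
  obtain ⟨w, hw⟩ := not_forall.1 (mt (mem_torsion K).2 hu)
  rcases lt_or_gt_of_ne hw with hlt | hgt
  · refine ⟨w, u⁻¹, ?_⟩
    rw [← zpow_neg_one, coe_zpow, zpow_neg_one, map_inv₀]
    exact one_lt_inv_iff₀.2 ⟨InfinitePlace.pos_iff.2 (coe_ne_zero u), hlt⟩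
  · exact ⟨w, u, hgt⟩

/-- **Existence of a bad fundamental domain.** If the unit group of `𝓞_K` is infinite and
`S ⊆ 𝓞_K` is finite with `#S ≥ 3`, then there is an `𝓞_K^×`-fundamental domain containing no
`S`-constellation. -/
theorem exists_fundamental_domain_without_constellations
    {K : Type*} [Field K] [NumberField K]
    (hinf : Infinite (RingOfIntegers K)ˣ)
    (S : Finset (RingOfIntegers K)) (hS : 3 ≤ S.card) :
    ∃ D : Set (RingOfIntegers K),
      (∀ α ∈ D, α ≠ 0) ∧
      (∀ α : RingOfIntegers K, α ≠ 0 →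
        ∃! η : (RingOfIntegers K)ˣ,
          ((η⁻¹ : (RingOfIntegers K)ˣ) : RingOfIntegers K) * α ∈ D) ∧
      ¬∃ (α : RingOfIntegers K) (k : ℕ), 0 < k ∧ ∀ s ∈ S, α + k • s ∈ D := by
  obtain ⟨w, u, hu⟩ := NumberField.Units.exists_one_lt_of_infinite hinf
  let v : AbsoluteValue (𝓞 K) ℝ := w.1.comp RingOfIntegers.coe_injective
  obtain ⟨t, ht, htS⟩ : ∃ t : Fin 3 → 𝓞 K, Function.Injective t ∧ ∀ i, t i ∈ S :=
    ⟨fun i => S.equivFin.symm (Fin.castLE hS i),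
      Subtype.val_injective.comp (S.equivFin.symm.injective.comp (Fin.castLE_injective hS)),
      fun i => (S.equivFin.symm _).2⟩
  let c : Fin 3 → 𝓞 K := fun i => t (i + 1) - t (i + 2)
  have hc : ∀ i, c i ≠ 0 := fun i =>
    sub_ne_zero.2 (ht.ne ((add_right_injective i).ne (by decide)))
  obtain ⟨M, hM, hcM⟩ := v.exists_one_le_and_sum_erase_lt hc
  obtain ⟨D, hD0, hD, hsep⟩ := v.exists_fundamental_domain_pairwise_separated (u := u) hu M
  refine ⟨D, hD0, hD, ?_⟩
  rintro ⟨α, k, hk, hαk⟩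
  let x : Fin 3 → 𝓞 K := fun i => α + k • t i
  have hxD : ∀ i, x i ∈ D := fun i => hαk _ (htS i)
  have hx : Function.Injective x :=
    (add_right_injective α).comp ((smul_right_injective _ hk.ne').comp ht)
  refine v.sum_mul_ne_zero_of_pairwise_separated hM hcM (fun i => hD0 _ (hxD i))
    (hsep.on_injective hx hxD) ?_
  simp only [Fin.sum_univ_three, Fin.isValue, Fin.reduceAdd, zero_add, nsmul_eq_mul, c, x]
  ring
end

section
/- Let K be a number field of degree n, ω an integral basis of K, and let k := r₁ + r₂ − 1 be the rank of the unit group of 𝓞_K. Then: (1) there exists Ξ > 0 depending only on ω such that for all real M ≥ 1 and all nonzero α ∈ 𝓞_K with 𝐍(α) ≤ Ξ·Mⁿ, the number of β ∈ 𝓞_K(ω,M) associate to α is at most Ξ·(log(Ξ·Mⁿ/𝐍(α)))^k; and (2) there exists Ξ' > 0 depending only on ω such that for all real M ≥ 2 and all nonzero α ∈ 𝓞_K, the number of β ∈ 𝓞_K(ω,M) associate to α is at most Ξ'·(log M)^k. -/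
/-!
Two associates `β₀` and `β = β₀ u` in the box `𝓞_K(ω, M)` have all archimedean absolute values
at most `C M`, with `C` depending only on `ω`. They have the same norm `N`, so each term
`mult w * log (w β)` of `∑ w, mult w * log (w β) = log N` lies in the interval of length
`T = n log (C M) - log N` below `mult w * log (C M)`, and the logarithmic embedding of `u` has
sup-norm at most `T`. Such a unit is a root of unity times `∏ εᵢ ^ mᵢ` with `|mᵢ| ≤ D T`, for the
fundamental units `εᵢ`, so there are at most `A (T + 1) ^ k` of them, and `T + 1 ≤ log (Ξ Mⁿ / N)`
as soon as `Ξ ≥ e Cⁿ`. Part (2) follows from part (1): a nonempty orbit forces `N ≤ Cⁿ Mⁿ`.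
-/

open scoped Classical
open NumberField NumberField.InfinitePlace NumberField.Units NumberField.Units.dirichletUnitTheorem

theorem Int.card_Icc_neg_floor_le {x : ℝ} (hx : 0 ≤ x) :
    ((Finset.Icc (-⌊x⌋) ⌊x⌋).card : ℝ) ≤ 2 * x + 1 := by
  have hcard : ((Finset.Icc (-⌊x⌋) ⌊x⌋).card : ℤ) = 2 * ⌊x⌋ + 1 := by
    have := Int.floor_nonneg.mpr hx
    rw [Int.card_Icc]
    omega
  have hfloor := Int.floor_le x
  calc ((Finset.Icc (-⌊x⌋) ⌊x⌋).card : ℝ) = ((2 * ⌊x⌋ + 1 : ℤ) : ℝ) := by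
        rw [← hcard, Int.cast_natCast]
    _ ≤ 2 * x + 1 := by push_cast; linarith

theorem Real.add_one_le_log_mul_pow_div {n : ℕ} {C M N Ξ : ℝ} (hC : 0 < C) (hM : 0 < M)
    (hN : 0 < N) (hΞ : Real.exp 1 * C ^ n ≤ Ξ) :
    n * Real.log (C * M) - Real.log N + 1 ≤ Real.log (Ξ * M ^ n / N) := by
  have hlogΞ : 1 + n * Real.log C ≤ Real.log Ξ :=
    calc 1 + n * Real.log C = Real.log (Real.exp 1 * C ^ n) := by
          rw [Real.log_mul (Real.exp_pos 1).ne' (pow_pos hC n).ne', Real.log_exp, Real.log_pow]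
      _ ≤ Real.log Ξ := Real.log_le_log (by positivity) hΞ
  have hΞ0 : 0 < Ξ := lt_of_lt_of_le (by positivity) hΞ
  rw [Real.log_div (by positivity) hN.ne', Real.log_mul hΞ0.ne' (by positivity), Real.log_pow,
    Real.log_mul hC.ne' hM.ne']
  linarith

theorem Real.log_mul_pow_div_le {n : ℕ} {Ξ M N : ℝ} (hΞ : 1 ≤ Ξ) (hM : 2 ≤ M) (hN : 1 ≤ N) :
    Real.log (Ξ * M ^ n / N) ≤ (Real.log Ξ / Real.log 2 + n) * Real.log M := by
  have hlog2 : 0 < Real.log 2 := Real.log_pos one_lt_two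
  have hΞM : Real.log Ξ ≤ Real.log Ξ / Real.log 2 * Real.log M :=
    calc Real.log Ξ = Real.log Ξ / Real.log 2 * Real.log 2 := by field_simp
      _ ≤ _ := by
        gcongr
        exact div_nonneg (Real.log_nonneg hΞ) hlog2.le
  calc Real.log (Ξ * M ^ n / N) ≤ Real.log (Ξ * M ^ n) :=
        Real.log_le_log (by positivity) (div_le_self (by positivity) hN)
    _ = Real.log Ξ + n * Real.log M := by
        rw [Real.log_mul (by positivity) (by positivity), Real.log_pow]
    _ ≤ _ := by linarith

namespace NumberField

variable {K : Type*} [Field K]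

theorem natAbs_norm_eq_of_associated {α β : 𝓞 K} (h : Associated α β) :
    (Algebra.norm ℤ β).natAbs = (Algebra.norm ℤ α).natAbs :=
  (Int.associated_iff_natAbs.mp (h.map (Algebra.norm ℤ : 𝓞 K →* ℤ))).symm

theorem place_le_mul_sum_of_abs_repr_le {ι : Type*} [Fintype ι] (ω : Module.Basis ι ℤ (𝓞 K))
    {β : 𝓞 K} {M : ℝ} (hβ : ∀ i, |(ω.repr β i : ℝ)| ≤ M) (w : InfinitePlace K) :
    w (β : K) ≤ M * ∑ i, w (ω i : K) := by
  have hsum : (β : K) = ∑ i, (ω.repr β i : K) * (ω i : K) := by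
    conv_lhs => rw [← ω.sum_repr β]
    push_cast
    simp_rw [zsmul_eq_mul]
  calc w (β : K) ≤ ∑ i, w ((ω.repr β i : K) * (ω i : K)) := hsum ▸ w.1.sum_le _ _
    _ = ∑ i, |(ω.repr β i : ℝ)| * w (ω i : K) := by
        simp_rw [map_mul, ← norm_embedding_eq, map_intCast, Complex.norm_intCast]
    _ ≤ ∑ i, M * w (ω i : K) := by gcongr with i; exact hβ i
    _ = M * ∑ i, w (ω i : K) := Finset.mul_sum _ _ _ |>.symm

variable [NumberField K]

theorem exists_place_le_mul_of_abs_repr_le {ι : Type*} [Fintype ι]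
    (ω : Module.Basis ι ℤ (𝓞 K)) : ∃ C : ℝ, 0 < C ∧ ∀ (β : 𝓞 K) (M : ℝ), 0 ≤ M →
      (∀ i, |(ω.repr β i : ℝ)| ≤ M) → ∀ w : InfinitePlace K, w (β : K) ≤ C * M := by
  refine ⟨1 + ∑ w : InfinitePlace K, ∑ i, w (ω i : K), by positivity, fun β M hM hβ w ↦ ?_⟩
  have hw : ∑ i, w (ω i : K) ≤ 1 + ∑ w : InfinitePlace K, ∑ i, w (ω i : K) :=
    (Finset.single_le_sum (f := fun w : InfinitePlace K ↦ ∑ i, w (ω i : K))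
      (fun _ _ ↦ by positivity) (Finset.mem_univ w)).trans (le_add_of_nonneg_left zero_le_one)
  calc w (β : K) ≤ M * ∑ i, w (ω i : K) := place_le_mul_sum_of_abs_repr_le ω hβ w
    _ ≤ _ := by rw [mul_comm]; gcongr

theorem one_le_natAbs_norm {α : 𝓞 K} (hα : α ≠ 0) : (1 : ℝ) ≤ (Algebra.norm ℤ α).natAbs := by
  exact_mod_cast Int.natAbs_pos.mpr (Algebra.norm_ne_zero_iff.mpr hα)

theorem prod_place_pow_mult_eq_natAbs_norm (β : 𝓞 K) :
    ∏ w : InfinitePlace K, w (β : K) ^ mult w = ((Algebra.norm ℤ β).natAbs : ℝ) := by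
  rw [prod_eq_abs_norm, ← Algebra.coe_norm_int, Nat.cast_natAbs]
  push_cast
  rfl

theorem natAbs_norm_le_pow {β : 𝓞 K} {B : ℝ} (hB : ∀ w : InfinitePlace K, w (β : K) ≤ B) :
    ((Algebra.norm ℤ β).natAbs : ℝ) ≤ B ^ Module.finrank ℚ K := by
  rw [← prod_place_pow_mult_eq_natAbs_norm, ← sum_mult_eq, ← Finset.prod_pow_eq_pow_sum]
  exact Finset.prod_le_prod (fun w _ ↦ pow_nonneg (apply_nonneg w _) _)
    (fun w _ ↦ pow_le_pow_left₀ (apply_nonneg w _) (hB w) _)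

theorem sum_mult_mul_log_place {β : 𝓞 K} (hβ : β ≠ 0) :
    ∑ w : InfinitePlace K, (mult w : ℝ) * Real.log (w (β : K)) =
      Real.log ((Algebra.norm ℤ β).natAbs) := by
  rw [← prod_place_pow_mult_eq_natAbs_norm, Real.log_prod]
  · simp_rw [Real.log_pow]
  · exact fun w _ ↦ pow_ne_zero _ (pos_iff.mpr (by exact_mod_cast hβ)).ne'

theorem mult_mul_log_sub_mem_Icc {β : 𝓞 K} (hβ : β ≠ 0) {B : ℝ}
    (hB : ∀ w : InfinitePlace K, w (β : K) ≤ B) (w : InfinitePlace K) :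
    mult w * (Real.log B - Real.log (w (β : K))) ∈
      Set.Icc 0 (Module.finrank ℚ K * Real.log B - Real.log ((Algebra.norm ℤ β).natAbs)) := by
  have hd (w' : InfinitePlace K) : 0 ≤ (mult w' : ℝ) * (Real.log B - Real.log (w' (β : K))) :=
    mul_nonneg (Nat.cast_nonneg _)
      (sub_nonneg.mpr (Real.log_le_log (pos_iff.mpr (by exact_mod_cast hβ)) (hB w')))
  refine ⟨hd w, ?_⟩
  calc _ ≤ ∑ w', (mult w' : ℝ) * (Real.log B - Real.log (w' (β : K))) :=
        Finset.single_le_sum (fun w' _ ↦ hd w') (Finset.mem_univ w)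
    _ = _ := by
        simp_rw [mul_sub, Finset.sum_sub_distrib, ← Finset.sum_mul, sum_mult_mul_log_place hβ]
        rw [← Nat.cast_sum, sum_mult_eq]

theorem norm_logEmbedding_le {β : 𝓞 K} (hβ : β ≠ 0) (u : (𝓞 K)ˣ) {B : ℝ}
    (hB : ∀ w : InfinitePlace K, w (β : K) ≤ B)
    (hBu : ∀ w : InfinitePlace K, w ((β * u : 𝓞 K) : K) ≤ B) :
    ‖logEmbedding K (Additive.ofMul u)‖ ≤
      Module.finrank ℚ K * Real.log B - Real.log ((Algebra.norm ℤ β).natAbs) := by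
  have hN : (Algebra.norm ℤ (β * u)).natAbs = (Algebra.norm ℤ β).natAbs :=
    natAbs_norm_eq_of_associated (associated_mul_unit_right β u u.isUnit)
  have h := mult_mul_log_sub_mem_Icc hβ hB
  have hu := mult_mul_log_sub_mem_Icc (mul_ne_zero hβ u.ne_zero) hBu
  rw [hN] at hu
  refine (pi_norm_le_iff_of_nonneg ((h w₀).1.trans (h w₀).2)).mpr fun w ↦ ?_
  have hlog : mult w.1 * Real.log (w.1 (u : K)) = mult w.1 * (Real.log B - Real.log (w.1 β))
      - mult w.1 * (Real.log B - Real.log (w.1 ((β * u : 𝓞 K) : K))) := by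
    push_cast
    rw [map_mul, Real.log_mul (pos_iff.mpr (by exact_mod_cast hβ)).ne'
      (pos_at_place u w.1).ne']
    ring
  rw [Real.norm_eq_abs, logEmbedding_component, hlog]
  exact abs_sub_le_of_nonneg_of_le (h w).1 (h w).2 (hu w).1 (hu w).2

theorem logEmbedding_eq_sum_smul_basis {u ζ : (𝓞 K)ˣ} (hζ : ζ ∈ torsion K)
    {e : Fin (rank K) → ℤ} (h : u = ζ * ∏ i, fundSystem K i ^ e i) :
    logEmbedding K (Additive.ofMul u) =
      ∑ i, (e i : ℝ) • (basisUnitLattice K).ofZLatticeBasis ℝ (unitLattice K) i := by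
  rw [h, ofMul_mul, ofMul_prod, map_add, map_sum, logEmbedding_eq_zero_iff.mpr hζ, zero_add]
  refine Finset.sum_congr rfl fun i _ ↦ ?_
  rw [ofMul_zpow, map_zsmul, logEmbedding_fundSystem, Module.Basis.ofZLatticeBasis_apply,
    Int.cast_smul_eq_zsmul]

theorem exists_abs_le_mul_norm_logEmbedding : ∃ D : ℝ, 0 ≤ D ∧
    ∀ (u ζ : (𝓞 K)ˣ) (e : Fin (rank K) → ℤ), ζ ∈ torsion K →
      u = ζ * ∏ i, fundSystem K i ^ e i →
      ∀ i, |(e i : ℝ)| ≤ D * ‖logEmbedding K (Additive.ofMul u)‖ := by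
  let b := (basisUnitLattice K).ofZLatticeBasis ℝ (unitLattice K)
  let L : logSpace K →L[ℝ] Fin (rank K) → ℝ := b.equivFun.toContinuousLinearEquiv
  refine ⟨‖L‖, norm_nonneg _, fun u ζ e hζ h i ↦ ?_⟩
  have hL : L (logEmbedding K (Additive.ofMul u)) = fun i ↦ (e i : ℝ) := by
    rw [logEmbedding_eq_sum_smul_basis hζ h]
    exact b.repr_sum_self fun i ↦ (e i : ℝ)
  calc |(e i : ℝ)| = ‖L (logEmbedding K (Additive.ofMul u)) i‖ := by
        rw [hL, Real.norm_eq_abs]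
    _ ≤ ‖L (logEmbedding K (Additive.ofMul u))‖ := norm_le_pi_norm _ i
    _ ≤ _ := L.le_opNorm _

theorem exists_ncard_norm_logEmbedding_le : ∃ A : ℝ, 0 < A ∧ ∀ r : ℝ, 0 ≤ r →
    {u : (𝓞 K)ˣ | ‖logEmbedding K (Additive.ofMul u)‖ ≤ r}.Finite ∧
    ({u : (𝓞 K)ˣ | ‖logEmbedding K (Additive.ofMul u)‖ ≤ r}.ncard : ℝ) ≤
      A * (r + 1) ^ rank K := by
  obtain ⟨D, hD, hcoord⟩ := exists_abs_le_mul_norm_logEmbedding (K := K)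
  choose f hf using fun u : (𝓞 K)ˣ ↦ (exist_unique_eq_mul_prod K u).exists
  have := Fintype.ofFinite (torsion K)
  refine ⟨torsionOrder K * (2 * D + 1) ^ rank K,
    mul_pos (Nat.cast_pos.mpr (torsionOrder_pos K)) (by positivity), fun r hr ↦ ?_⟩
  set U := {u : (𝓞 K)ˣ | ‖logEmbedding K (Additive.ofMul u)‖ ≤ r}
  let F := (Finset.univ : Finset (torsion K)) ×ˢ
    Fintype.piFinset fun _ : Fin (rank K) ↦ Finset.Icc (-⌊D * r⌋) ⌊D * r⌋
  have hmaps : Set.MapsTo f U F := fun u hu ↦ by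
    simp only [F, Finset.coe_product, Finset.coe_univ, Set.mem_prod, Set.mem_univ, true_and,
      Finset.mem_coe, Fintype.mem_piFinset, Finset.mem_Icc]
    intro i
    have hi := abs_le.mp ((hcoord u _ _ (f u).1.2 (hf u) i).trans
      (mul_le_mul_of_nonneg_left hu hD))
    exact ⟨neg_le.mp (Int.le_floor.mpr (by push_cast; linarith)),
      Int.le_floor.mpr hi.2⟩
  have hinj : Set.InjOn f U := fun u _ v _ h ↦ by rw [hf u, hf v, h]
  refine ⟨Set.Finite.of_injOn hmaps hinj F.finite_toSet, ?_⟩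
  calc (U.ncard : ℝ) ≤ F.card := by
        exact_mod_cast Set.ncard_coe_finset F ▸ Set.ncard_le_ncard_of_injOn f hmaps hinj
    _ = torsionOrder K * ((Finset.Icc (-⌊D * r⌋) ⌊D * r⌋).card : ℝ) ^ rank K := by
        rw [Finset.card_product, Finset.card_univ, Fintype.card_piFinset, Finset.prod_const,
          Finset.card_univ, Fintype.card_fin, torsionOrder, Nat.card_eq_fintype_card]
        push_cast
        rfl
    _ ≤ torsionOrder K * (2 * (D * r) + 1) ^ rank K :=
        mul_le_mul_of_nonneg_left (pow_le_pow_left₀ (Nat.cast_nonneg _)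
          (Int.card_Icc_neg_floor_le (mul_nonneg hD hr)) _) (Nat.cast_nonneg _)
    _ ≤ _ := by
        rw [mul_assoc, ← mul_pow]
        gcongr
        nlinarith

theorem subset_image_mul_norm_logEmbedding_le {β₀ : 𝓞 K} (hβ₀ : β₀ ≠ 0) {B : ℝ}
    (hB₀ : ∀ w : InfinitePlace K, w (β₀ : K) ≤ B) {S : Set (𝓞 K)}
    (hS : ∀ β ∈ S, Associated β₀ β ∧ ∀ w : InfinitePlace K, w (β : K) ≤ B) :
    S ⊆ (fun u : (𝓞 K)ˣ ↦ β₀ * u) '' {u | ‖logEmbedding K (Additive.ofMul u)‖ ≤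
      Module.finrank ℚ K * Real.log B - Real.log ((Algebra.norm ℤ β₀).natAbs)} := by
  intro β hβ
  obtain ⟨u, rfl⟩ := (hS β hβ).1
  exact ⟨u, norm_logEmbedding_le hβ₀ u hB₀ (hS _ hβ).2, rfl⟩

theorem exists_ncard_associated_le {ι : Type*} [Fintype ι] (ω : Module.Basis ι ℤ (𝓞 K)) :
    ∃ Ξ₀ : ℝ, 0 < Ξ₀ ∧ ∀ Ξ : ℝ, Ξ₀ ≤ Ξ → ∀ M : ℝ, 1 ≤ M → ∀ α : 𝓞 K, α ≠ 0 →
      ((Algebra.norm ℤ α).natAbs : ℝ) ≤ Ξ * M ^ Module.finrank ℚ K →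
      (({β : 𝓞 K | Associated α β ∧ ∀ i, |(ω.repr β i : ℝ)| ≤ M}).ncard : ℝ) ≤
        Ξ * Real.log (Ξ * M ^ Module.finrank ℚ K / ((Algebra.norm ℤ α).natAbs : ℝ)) ^
          rank K := by
  obtain ⟨C, hC, hCω⟩ := exists_place_le_mul_of_abs_repr_le ω
  obtain ⟨A, hA, hU⟩ := exists_ncard_norm_logEmbedding_le (K := K)
  refine ⟨max A (Real.exp 1 * C ^ Module.finrank ℚ K), lt_max_of_lt_left hA,
    fun Ξ hΞ M hM α hα hN ↦ ?_⟩
  have hNα : (0 : ℝ) < (Algebra.norm ℤ α).natAbs := one_pos.trans_le (one_le_natAbs_norm hα)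
  set S := {β : 𝓞 K | Associated α β ∧ ∀ i, |(ω.repr β i : ℝ)| ≤ M}
  rcases S.eq_empty_or_nonempty with hS | ⟨β₀, hβ₀⟩
  · rw [hS, Set.ncard_empty, Nat.cast_zero]
    have : 0 ≤ Real.log (Ξ * M ^ Module.finrank ℚ K / (Algebra.norm ℤ α).natAbs) :=
      Real.log_nonneg ((one_le_div hNα).mpr hN)
    exact mul_nonneg (hA.le.trans (le_of_max_le_left hΞ)) (pow_nonneg this _)
  have hβ₀0 : β₀ ≠ 0 := hβ₀.1.ne_zero_iff.mp hα
  have hbox {β : 𝓞 K} (hβ : β ∈ S) := hCω β M (by linarith) hβ.2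
  set T := Module.finrank ℚ K * Real.log (C * M) - Real.log ((Algebra.norm ℤ α).natAbs)
  have hT : 0 ≤ T := by
    rw [sub_nonneg, ← Real.log_pow, ← natAbs_norm_eq_of_associated hβ₀.1]
    exact Real.log_le_log (natAbs_norm_eq_of_associated hβ₀.1 ▸ hNα)
      (natAbs_norm_le_pow (hbox hβ₀))
  have hsub := subset_image_mul_norm_logEmbedding_le hβ₀0 (hbox hβ₀)
    (S := S) fun β hβ ↦ ⟨hβ₀.1.symm.trans hβ.1, hbox hβ⟩
  rw [natAbs_norm_eq_of_associated hβ₀.1] at hsub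
  obtain ⟨hfin, hcard⟩ := hU T hT
  calc (S.ncard : ℝ) ≤ ({u : (𝓞 K)ˣ | ‖logEmbedding K (Additive.ofMul u)‖ ≤ T}.ncard : ℝ) := by
        exact_mod_cast (Set.ncard_le_ncard hsub (hfin.image _)).trans (Set.ncard_image_le hfin)
    _ ≤ A * (T + 1) ^ rank K := hcard
    _ ≤ _ := mul_le_mul (le_of_max_le_left hΞ) (pow_le_pow_left₀ (by linarith)
        (Real.add_one_le_log_mul_pow_div hC (by linarith) hNα (le_of_max_le_right hΞ)) _)
        (by positivity) (hA.le.trans (le_of_max_le_left hΞ))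

theorem exists_ncard_associated_le_mul_log_pow {ι : Type*} [Fintype ι]
    (ω : Module.Basis ι ℤ (𝓞 K)) : ∃ Ξ' : ℝ, 0 < Ξ' ∧ ∀ M : ℝ, 2 ≤ M → ∀ α : 𝓞 K, α ≠ 0 →
      (({β : 𝓞 K | Associated α β ∧ ∀ i, |(ω.repr β i : ℝ)| ≤ M}).ncard : ℝ) ≤
        Ξ' * Real.log M ^ rank K := by
  set n := Module.finrank ℚ K
  obtain ⟨Ξ₀, hΞ₀, hbound⟩ := exists_ncard_associated_le ω
  obtain ⟨C, -, hCω⟩ := exists_place_le_mul_of_abs_repr_le ω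
  set Ξ := max Ξ₀ (max (C ^ n) 1)
  have hΞ1 : 1 ≤ Ξ := le_max_of_le_right (le_max_right _ _)
  have hc : 0 < Real.log Ξ / Real.log 2 + n :=
    add_pos_of_nonneg_of_pos (div_nonneg (Real.log_nonneg hΞ1) (Real.log_pos one_lt_two).le)
      (Nat.cast_pos.mpr Module.finrank_pos)
  refine ⟨Ξ * (Real.log Ξ / Real.log 2 + n) ^ rank K,
    mul_pos (hΞ₀.trans_le (le_max_left _ _)) (by positivity), fun M hM α hα ↦ ?_⟩
  rcases Set.eq_empty_or_nonempty
    {β : 𝓞 K | Associated α β ∧ ∀ i, |(ω.repr β i : ℝ)| ≤ M} with hS | ⟨β, hβ⟩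
  · rw [hS, Set.ncard_empty, Nat.cast_zero]
    exact mul_nonneg (by positivity) (pow_nonneg (Real.log_nonneg (by linarith)) _)
  have hN : ((Algebra.norm ℤ α).natAbs : ℝ) ≤ Ξ * M ^ n := by
    rw [← natAbs_norm_eq_of_associated hβ.1]
    refine (natAbs_norm_le_pow (hCω β M (by linarith) hβ.2)).trans ?_
    rw [mul_pow]
    gcongr
    exact le_max_of_le_right (le_max_left _ _)
  calc _ ≤ Ξ * Real.log (Ξ * M ^ n / (Algebra.norm ℤ α).natAbs) ^ rank K :=
        hbound Ξ (le_max_left _ _) M (by linarith) α hα hN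
    _ ≤ Ξ * ((Real.log Ξ / Real.log 2 + n) * Real.log M) ^ rank K := by
        gcongr
        · exact Real.log_nonneg ((one_le_div (one_pos.trans_le (one_le_natAbs_norm hα))).mpr hN)
        · exact Real.log_mul_pow_div_le hΞ1 hM (one_le_natAbs_norm hα)
    _ = _ := by rw [mul_pow, mul_assoc]

end NumberField

/-- **Counting elements of `𝓞_K^×`-orbits with respect to the `ℓ∞`-length.**
With `k = r₁ + r₂ − 1` the rank of the unit group:
(1) there is `Ξ > 0` such that for `M ≥ 1` and nonzero `α` with `𝐍(α) ≤ Ξ·Mⁿ`, the number of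
elements of `𝓞_K(ω, M)` associate to `α` is at most `Ξ·(log(Ξ·Mⁿ/𝐍(α)))^k`;
(2) there is `Ξ' > 0` such that for `M ≥ 2` and nonzero `α`, this number is at most
`Ξ'·(log M)^k`. -/
theorem counting_unit_orbits
    {K : Type*} [Field K] [NumberField K]
    {ι : Type*} [Fintype ι] (ω : Module.Basis ι ℤ (RingOfIntegers K)) :
    (∃ Ξ : ℝ, 0 < Ξ ∧
      ∀ M : ℝ, 1 ≤ M → ∀ α : RingOfIntegers K, α ≠ 0 →
        ((Algebra.norm ℤ α).natAbs : ℝ) ≤ Ξ * M ^ Fintype.card ι →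
        (({β : RingOfIntegers K | Associated α β ∧ ∀ i, |(ω.repr β i : ℝ)| ≤ M}).ncard : ℝ) ≤
          Ξ * (Real.log (Ξ * M ^ Fintype.card ι / ((Algebra.norm ℤ α).natAbs : ℝ))) ^
            NumberField.Units.rank K) ∧
    (∃ Ξ' : ℝ, 0 < Ξ' ∧
      ∀ M : ℝ, 2 ≤ M → ∀ α : RingOfIntegers K, α ≠ 0 →
        (({β : RingOfIntegers K | Associated α β ∧ ∀ i, |(ω.repr β i : ℝ)| ≤ M}).ncard : ℝ) ≤
          Ξ' * (Real.log M) ^ NumberField.Units.rank K) := by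
  rw [← Module.finrank_eq_card_basis ω, RingOfIntegers.rank K]
  obtain ⟨Ξ, hΞ, hbound⟩ := exists_ncard_associated_le ω
  exact ⟨⟨Ξ, hΞ, hbound Ξ le_rfl⟩, exists_ncard_associated_le_mul_log_pow ω⟩
end

section
/- Slide trick: let n be a positive integer and let the additive group ℤⁿ act simply transitively on a nonempty set 𝕃 (for all l, l' ∈ 𝕃 there is a unique z ∈ ℤⁿ with z·l = l'). Let P and X be finite nonempty subsets of 𝕃, and let 𝒬 be the (finite, nonempty) family of all translates z·P (z ∈ ℤⁿ) that intersect X. Then there exists Q ∈ 𝒬 such that #(Q ∩ X)·#𝒬 ≥ #X·#P; equivalently, #(Q ∩ X)/#Q ≥ #X/#𝒬. -/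
/-!
A translate of `P` meets `X` exactly when it is `(x -ᵥ p) +ᵥ P` with `x ∈ X`, `p ∈ P`, and in a
torsion-free group distinct elements move a finite nonempty set to distinct translates. Hence
every `x ∈ X` lies in exactly `#P` of the translates meeting `X`, so double counting gives
`∑_{Q ∈ 𝒬} #(Q ∩ X) = #X * #P`, and some `Q ∈ 𝒬` is at least the average.
-/

/-- The family of all translates of `P` (under the `ℤⁿ`-action) that meet `X`. -/
def translatesMeeting (n : ℕ) {L : Type*} [DecidableEq L] [AddAction (Fin n → ℤ) L]
    (P X : Finset L) : Set (Finset L) :=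
  {Q : Finset L | (∃ z : Fin n → ℤ, Q = P.image fun p => z +ᵥ p) ∧ (Q ∩ X).Nonempty}

open Finset Pointwise

noncomputable abbrev AddTorsor.ofExistsUnique {G L : Type*} [AddGroup G] [AddAction G L]
    [Nonempty L] (h : ∀ l l' : L, ∃! g : G, g +ᵥ l = l') : AddTorsor G L where
  vsub l' l := (h l l').choose
  vsub_vadd' l' l := (h l l').choose_spec.1
  vadd_vsub' g l := ((h l (g +ᵥ l)).choose_spec.2 g rfl).symm

namespace Finset

variable {G L : Type*} [AddGroup G] [AddTorsor G L] [DecidableEq L]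

theorem eq_zero_of_vadd_finset_eq_self [IsAddTorsionFree G] {P : Finset L} (hP : P.Nonempty)
    {g : G} (hg : g +ᵥ P = P) : g = 0 := by
  by_contra hg0
  obtain ⟨p, hp⟩ := hP
  have hmem (k : ℕ) : k • g +ᵥ p ∈ P := by
    have hk : k • g +ᵥ P = P :=
      (AddAction.stabilizer G P).nsmul_mem (AddAction.mem_stabilizer_iff.2 hg) k
    exact hk ▸ vadd_mem_vadd_finset hp
  -- the orbit of `p` under the multiples of `g` is infinite but stays in `P`
  refine not_injective_infinite_finite (fun k : ℕ => (⟨k • g +ᵥ p, hmem k⟩ : P)) fun a b hab => ?_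
  exact injective_nsmul_iff_not_isOfFinAddOrder.2 (not_isOfFinAddOrder_of_isAddTorsionFree hg0)
    (vadd_right_cancel p (congrArg Subtype.val hab))

theorem vadd_finset_left_injective [IsAddTorsionFree G] {P : Finset L} (hP : P.Nonempty) :
    Function.Injective (· +ᵥ P : G → Finset L) := fun g h (hgh : g +ᵥ P = h +ᵥ P) => by
  have hstab : (-g + h) +ᵥ P = P := by rw [add_vadd, ← hgh, neg_vadd_vadd]
  exact neg_add_eq_zero.1 (eq_zero_of_vadd_finset_eq_self hP hstab)

theorem mem_vadd_finset_iff_exists_vsub_eq {P : Finset L} {g : G} {x : L} :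
    x ∈ g +ᵥ P ↔ ∃ p ∈ P, x -ᵥ p = g := by
  simp only [mem_vadd_finset, eq_comm (a := g +ᵥ _), eq_vadd_iff_vsub_eq]

variable [DecidableEq G]

theorem mem_vsub_iff_vadd_finset_inter_nonempty {P X : Finset L} {g : G} :
    g ∈ X -ᵥ P ↔ ((g +ᵥ P) ∩ X).Nonempty := by
  simp only [mem_vsub, Finset.Nonempty, mem_inter, mem_vadd_finset_iff_exists_vsub_eq]
  aesop

theorem sum_card_inter_vadd_finset [IsAddTorsionFree G] {P : Finset L} (hP : P.Nonempty)
    (X : Finset L) : ∑ Q ∈ (X -ᵥ P).image (· +ᵥ P), #(X ∩ Q) = #X * #P := by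
  refine sum_card_inter fun x hx => ?_
  have htranslates : {Q ∈ (X -ᵥ P).image (· +ᵥ P) | x ∈ Q} = P.image fun p => (x -ᵥ p) +ᵥ P := by
    ext Q
    simp only [mem_filter, mem_image, mem_vsub]
    constructor
    · rintro ⟨⟨g, -, rfl⟩, hxQ⟩
      obtain ⟨p, hp, rfl⟩ := mem_vadd_finset_iff_exists_vsub_eq.1 hxQ
      exact ⟨p, hp, rfl⟩
    · rintro ⟨p, hp, rfl⟩
      exact ⟨⟨_, ⟨x, hx, p, hp, rfl⟩, rfl⟩, mem_vadd_finset_iff_exists_vsub_eq.2 ⟨p, hp, rfl⟩⟩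
  rw [htranslates]
  exact card_image_of_injective _ ((vadd_finset_left_injective hP).comp (vsub_right_injective x))

theorem exists_card_mul_le_card_inter_vadd_finset [IsAddTorsionFree G] {P X : Finset L}
    (hP : P.Nonempty) (hX : X.Nonempty) :
    ∃ Q ∈ (X -ᵥ P).image (· +ᵥ P), #X * #P ≤ #(Q ∩ X) * #((X -ᵥ P).image (· +ᵥ P)) := by
  refine exists_le_of_sum_le ((hX.vsub hP).image _) (le_of_eq ?_)
  simp_rw [sum_const, smul_eq_mul, ← sum_mul, inter_comm _ X, sum_card_inter_vadd_finset hP,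
    mul_comm]

end Finset

theorem translatesMeeting_eq_coe_image (n : ℕ) {L : Type*} [DecidableEq L]
    [AddTorsor (Fin n → ℤ) L] (P X : Finset L) :
    translatesMeeting n P X = ↑((X -ᵥ P).image (· +ᵥ P)) := by
  ext Q
  simp only [translatesMeeting, image_vadd, Set.mem_ofPred_eq, coe_image, Set.mem_image, mem_coe,
    mem_vsub_iff_vadd_finset_inter_nonempty]
  aesop

/-- **The slide trick.** If `ℤⁿ` acts simply transitively on `𝕃`, `P, X ⊆ 𝕃` are finite and
nonempty, and `𝒬` is the family of translates of `P` meeting `X`, then some `Q ∈ 𝒬` satisfies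
`#(Q ∩ X) · #𝒬 ≥ #X · #P`. -/
theorem slide_trick (n : ℕ) {L : Type*} [DecidableEq L] [AddAction (Fin n → ℤ) L]
    (htrans : ∀ l l' : L, ∃! z : Fin n → ℤ, z +ᵥ l = l')
    (P X : Finset L) (hP : P.Nonempty) (hX : X.Nonempty) :
    ∃ Q ∈ translatesMeeting n P X,
      X.card * P.card ≤ (Q ∩ X).card * (translatesMeeting n P X).ncard := by
  have : Nonempty L := hX.to_subtype.map Subtype.val
  let _ : AddTorsor (Fin n → ℤ) L := .ofExistsUnique htrans
  simpa only [translatesMeeting_eq_coe_image, mem_coe, Set.ncard_coe_finset]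
    using exists_card_mul_le_card_inter_vadd_finset hP hX
end

section
/- Let F(x,y) = ax² + bxy + cy² with a, b, c ∈ ℤ, gcd(a,b,c) = 1, and suppose D_F = b² − 4ac is not a perfect square. Then there exist: a number field K with [K:ℚ] = 2 containing an element θ with θ² = D_F; a subring 𝒪 ⊆ K that is free of rank 2 as a ℤ-module (an order in K); an ideal 𝔠 of 𝒪 that is invertible, i.e. there exists an 𝒪-submodule 𝔡 of K with 𝔠·𝔡 = 𝒪 as 𝒪-submodules of K; a ℤ-basis (γ₁, γ₂) of 𝔠; and ε ∈ {1, −1}; such that for all x, y ∈ ℤ: N_{K/ℚ}(γ₁·x + γ₂·y) = ε · #(𝒪/𝔠) · F(x,y) in ℚ. -/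
/-!
With `ω² = bω - ac` the element `2ω - b` squares to `b² - 4ac`, so `K = ℚ(ω)` is the quadratic
field of discriminant `D_F`. Take `𝒪 = ℤ[ω]` and `𝔠 = aℤ + ωℤ`, which is the ideal `(a, ω)` of
`𝒪` because `a ∣ ω² - bω`. Then `N(xa + yω) = a·F(x, y)`, and `𝒪/𝔠 ≅ ℤ/aℤ` through the
coordinate of `1`, so `N(xa + yω) = sign(a)·#(𝒪/𝔠)·F(x, y)`. For `τ = (b - ω)/a` one has
`aτ = b - ω` and `ωτ = c`, hence `𝔠·(1, τ) = (a, b - ω, ω, c)`, which is `𝒪` since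
`gcd(a, b, c) = 1`.
-/

set_option synthInstance.maxHeartbeats 400000
set_option maxHeartbeats 1000000

/-- The property that the primitive binary quadratic form `a x² + b x y + c y²` is realized,
inside the number field `K`, as `ε⁻¹·𝐍(𝔠)⁻¹` times the norm form of a `ℤ`-basis `(γ₁, γ₂)`
of an invertible ideal `𝔠` of an order `𝒪` of `K`. -/
def IsQuadFormIdealNormRepresentation (a b c : ℤ) (K : Type) [Field K] [NumberField K] :
    Prop :=
  Module.finrank ℚ K = 2 ∧
  (∃ θ : K, θ ^ 2 = ((b ^ 2 - 4 * a * c : ℤ) : K)) ∧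
  ∃ O : Subalgebra ℤ K, Module.Free ℤ O ∧ Module.finrank ℤ O = 2 ∧
    ∃ I : Submodule O K,
      (I : Set K) ⊆ (O : Set K) ∧
      (∃ J : Submodule O K, I * J = 1) ∧
      ∃ γ₁ γ₂ : K, γ₁ ∈ I ∧ γ₂ ∈ I ∧
        (∀ z ∈ I, ∃! p : ℤ × ℤ, z = p.1 • γ₁ + p.2 • γ₂) ∧
        ∃ ε : ℤ, (ε = 1 ∨ ε = -1) ∧
          ∀ x y : ℤ,
            Algebra.norm ℚ ((x : K) * γ₁ + (y : K) * γ₂) =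
              (ε : ℚ) * (Nat.card (O ⧸ Submodule.comap (Algebra.linearMap O K) I) : ℚ) *
                ((a * x ^ 2 + b * x * y + c * y ^ 2 : ℤ) : ℚ)

theorem one_mem_of_intCast_mem_of_gcd_eq_one {A S : Type*} [Ring A] [SetLike S A]
    [AddSubgroupClass S A] {M : S} {a b c : ℤ} (hprim : Int.gcd a (Int.gcd b c : ℤ) = 1)
    (ha : (a : A) ∈ M) (hb : (b : A) ∈ M) (hc : (c : A) ∈ M) : (1 : A) ∈ M := by
  have hbc := Int.gcd_eq_gcd_ab b c
  have habc := Int.gcd_eq_gcd_ab a (Int.gcd b c)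
  rw [hprim] at habc
  have hbezout : (1 : A) = Int.gcdA a (Int.gcd b c) • (a : A)
      + (Int.gcdA b c * Int.gcdB a (Int.gcd b c)) • (b : A)
      + (Int.gcdB b c * Int.gcdB a (Int.gcd b c)) • (c : A) := by
    simp only [zsmul_eq_mul, ← Int.cast_mul, ← Int.cast_add]
    rw [← Int.cast_one]
    congr 1
    linear_combination habc + Int.gcdB a (Int.gcd b c) * hbc
  rw [hbezout]
  exact add_mem (add_mem (zsmul_mem ha _) (zsmul_mem hb _)) (zsmul_mem hc _)

namespace QuadraticAlgebra

section CommRing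

variable {R : Type*} [CommRing R] {a b : R}

theorem algebra_norm_eq_norm (z : QuadraticAlgebra R a b) : Algebra.norm R z = z.norm := by
  rw [Algebra.norm_apply]
  exact det_toLinearMap_eq_norm z

theorem mem_span_algebraMap_omega_iff {n : R} (hn : n ∣ a) {z : QuadraticAlgebra R a b} :
    z ∈ Ideal.span {algebraMap R _ n, ω} ↔ n ∣ z.re := by
  rw [Ideal.mem_span_pair]
  constructor
  · rintro ⟨u, v, rfl⟩
    simpa using dvd_add (dvd_mul_left n _) (hn.mul_right _)
  · rintro ⟨m, hm⟩
    exact ⟨algebraMap R _ m, algebraMap R _ z.im, by ext <;> simp [hm]; ring⟩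

end CommRing

theorem sq_ne_add_mul_of_not_isSquare {K : Type*} [Field K] [NeZero (2 : K)] {a b : K}
    (h : ¬IsSquare (b ^ 2 + 4 * a)) (r : K) : r ^ 2 ≠ a + b * r := by
  intro hr
  refine h ⟨2 * r - b, ?_⟩
  linear_combination (-4) * hr

instance {a b : ℚ} [Fact (∀ r : ℚ, r ^ 2 ≠ a + b * r)] : NumberField (QuadraticAlgebra ℚ a b) :=
  ⟨⟩

theorem mem_span_intCast_omega_iff {a b n : ℤ} (hn : n ∣ a) {z : QuadraticAlgebra ℤ a b} :
    z ∈ Ideal.span {(n : QuadraticAlgebra ℤ a b), ω} ↔ n ∣ z.re := by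
  simpa using mem_span_algebraMap_omega_iff (b := b) hn (z := z)

theorem card_quotient_span_intCast_omega {a b n : ℤ} (hn : n ∣ a) :
    Nat.card (QuadraticAlgebra ℤ a b ⧸ Ideal.span {(n : QuadraticAlgebra ℤ a b), ω}) =
      n.natAbs := by
  set I := Ideal.span {(n : QuadraticAlgebra ℤ a b), ω}
  let f : QuadraticAlgebra ℤ a b →+ ZMod n.natAbs :=
    (Int.castAddHom _).comp (reₗ a b).toAddMonoidHom
  have hker : f.ker = I.toAddSubgroup := by
    ext z
    simp [f, I, mem_span_intCast_omega_iff hn, ZMod.intCast_zmod_eq_zero_iff_dvd]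
  have hsurj : Function.Surjective f := fun x => by
    obtain ⟨m, rfl⟩ := ZMod.intCast_surjective x
    exact ⟨(⟨m, 0⟩ : QuadraticAlgebra ℤ a b), by simp [f]⟩
  calc Nat.card (QuadraticAlgebra ℤ a b ⧸ I) = I.toAddSubgroup.index := rfl
    _ = n.natAbs := by
      rw [← hker, AddSubgroup.index_ker, AddMonoidHom.range_eq_top.mpr hsurj,
        AddSubgroup.card_top, Nat.card_zmod]

section IntToRat

variable (a b : ℤ)

def castToRat : QuadraticAlgebra ℤ a b →ₐ[ℤ] QuadraticAlgebra ℚ a b :=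
  lift ⟨ω, by ext <;> simp⟩

variable {a b}

@[simp]
theorem re_castToRat (z : QuadraticAlgebra ℤ a b) : (castToRat a b z).re = z.re := by
  simp [castToRat]

@[simp]
theorem im_castToRat (z : QuadraticAlgebra ℤ a b) : (castToRat a b z).im = z.im := by
  simp [castToRat]

@[simp]
theorem castToRat_intCast (n : ℤ) : castToRat a b n = n :=
  map_intCast _ n

@[simp]
theorem castToRat_omega : castToRat a b ω = ω := by
  ext <;> simp

theorem omega_mem_range_castToRat : ω ∈ (castToRat a b).range :=
  ⟨ω, castToRat_omega⟩

theorem castToRat_injective : Function.Injective (castToRat a b) := fun z w h => by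
  ext
  · simpa using congrArg re h
  · simpa using congrArg im h

theorem image_castToRat_pair (n : ℤ) :
    castToRat a b '' {(n : QuadraticAlgebra ℤ a b), ω} = {(n : QuadraticAlgebra ℚ a b), ω} := by
  simp [Set.image_pair]

instance : Module.Free ℤ (castToRat a b).range :=
  .of_equiv (AlgEquiv.ofInjective _ castToRat_injective).toLinearEquiv

theorem finrank_range_castToRat : Module.finrank ℤ (castToRat a b).range = 2 :=
  (AlgEquiv.ofInjective _ castToRat_injective).toLinearEquiv.finrank_eq.symm.trans
    (finrank_eq_two _ _)

end IntToRat

end QuadraticAlgebra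

namespace AlgHom

variable {A R B : Type*} [CommRing A] [CommRing R] [CommRing B] [Algebra A R] [Algebra A B]
  (f : R →ₐ[A] B)

theorem mem_span_range_image_iff {S : Set R} {z : B} :
    z ∈ Submodule.span f.range (f '' S) ↔ ∃ r ∈ Ideal.span S, f r = z := by
  constructor
  · intro hz
    induction hz using Submodule.span_induction with
    | mem x hx =>
      obtain ⟨s, hs, rfl⟩ := hx
      exact ⟨s, Ideal.subset_span hs, rfl⟩
    | zero => exact ⟨0, zero_mem _, map_zero f⟩
    | add x y _ _ hx hy =>
      obtain ⟨r, hr, rfl⟩ := hx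
      obtain ⟨t, ht, rfl⟩ := hy
      exact ⟨r + t, add_mem hr ht, map_add f r t⟩
    | smul o x _ hx =>
      obtain ⟨_, t, rfl⟩ := o
      obtain ⟨r, hr, rfl⟩ := hx
      exact ⟨t * r, Ideal.mul_mem_left _ t hr, map_mul f t r⟩
  · rintro ⟨r, hr, rfl⟩
    induction hr using Submodule.span_induction with
    | mem x hx => exact Submodule.subset_span ⟨x, hx, rfl⟩
    | zero => simp
    | add x y _ _ hx hy => simpa using add_mem hx hy
    | smul t x _ hx =>
      rw [smul_eq_mul, map_mul]
      exact Submodule.smul_mem _ (⟨f t, t, rfl⟩ : f.range) hx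

theorem card_quotient_comap_span_range_image (hf : Function.Injective f) (S : Set R) :
    Nat.card (f.range ⧸ Submodule.comap (Algebra.linearMap f.range B)
      (Submodule.span f.range (f '' S))) = Nat.card (R ⧸ Ideal.span S) := by
  let e := (AlgEquiv.ofInjective f hf).toRingEquiv
  refine (Nat.card_congr (Ideal.quotientEquiv _ _ e ?_).toEquiv).symm
  ext o
  obtain ⟨r, rfl⟩ := e.surjective o
  rw [Ideal.map_comap_of_equiv, Ideal.mem_comap, Submodule.mem_comap, mem_span_range_image_iff]
  simp [e, hf.eq_iff]

end AlgHom

namespace QuadraticAlgebra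

theorem mem_span_intCast_omega_iff_exists_zsmul {a b n : ℤ} (hn : n ∣ a)
    {z : QuadraticAlgebra ℚ a b} :
    z ∈ Submodule.span (castToRat a b).range {(n : QuadraticAlgebra ℚ a b), ω} ↔
      ∃ x y : ℤ, x • (n : QuadraticAlgebra ℚ a b) + y • ω = z := by
  rw [← image_castToRat_pair, AlgHom.mem_span_range_image_iff]
  simp_rw [mem_span_intCast_omega_iff hn]
  constructor
  · rintro ⟨r, ⟨m, hm⟩, rfl⟩
    exact ⟨m, r.im, by ext <;> simp [hm, mul_comm]⟩
  · rintro ⟨x, y, rfl⟩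
    exact ⟨⟨n * x, y⟩, dvd_mul_right n x, by ext <;> simp [mul_comm]⟩

theorem card_quotient_comap_span_intCast_omega {a b n : ℤ} (hn : n ∣ a) :
    Nat.card ((castToRat a b).range ⧸
      Submodule.comap (Algebra.linearMap (castToRat a b).range (QuadraticAlgebra ℚ a b))
        (Submodule.span (castToRat a b).range {(n : QuadraticAlgebra ℚ a b), ω})) =
      n.natAbs := by
  rw [← image_castToRat_pair, AlgHom.card_quotient_comap_span_range_image _ castToRat_injective,
    card_quotient_span_intCast_omega hn]

theorem coe_span_intCast_omega_subset_range {a b n : ℤ} (hn : n ∣ a) :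
    (Submodule.span (castToRat a b).range {(n : QuadraticAlgebra ℚ a b), ω} :
      Set (QuadraticAlgebra ℚ a b)) ⊆ (castToRat a b).range := by
  intro z hz
  obtain ⟨x, y, rfl⟩ := (mem_span_intCast_omega_iff_exists_zsmul hn).mp hz
  exact add_mem (zsmul_mem (intCast_mem _ n) x) (zsmul_mem omega_mem_range_castToRat y)

theorem existsUnique_zsmul_add_zsmul_of_mem_span_intCast_omega {a b n : ℤ} (hn : n ∣ a)
    (hn₀ : n ≠ 0) {z : QuadraticAlgebra ℚ a b}
    (hz : z ∈ Submodule.span (castToRat a b).range {(n : QuadraticAlgebra ℚ a b), ω}) :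
    ∃! p : ℤ × ℤ, z = p.1 • (n : QuadraticAlgebra ℚ a b) + p.2 • ω := by
  obtain ⟨x, y, rfl⟩ := (mem_span_intCast_omega_iff_exists_zsmul hn).mp hz
  refine ⟨(x, y), rfl, fun p hp => ?_⟩
  have hre := congrArg re hp
  have him := congrArg im hp
  simp at hre him
  exact Prod.ext (hre.resolve_right hn₀).symm him.symm

section Form

/- The parameter `a'` stands for `-(a * c)`: as a variable it keeps `simp` from rewriting the
cast `((-(a * c) : ℤ) : ℚ)` inside the type `QuadraticAlgebra ℚ a' b`. -/

variable {a b c a' : ℤ}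

theorem sq_ne_add_mul_of_not_exists_sq (ha' : a' = -(a * c))
    (hD : ¬∃ m : ℤ, b ^ 2 - 4 * a * c = m ^ 2) (r : ℚ) : r ^ 2 ≠ a' + b * r := by
  refine sq_ne_add_mul_of_not_isSquare ?_ r
  rw [show (b : ℚ) ^ 2 + 4 * a' = ((b ^ 2 - 4 * a * c : ℤ) : ℚ) by push_cast [ha']; ring,
    Rat.isSquare_intCast_iff]
  rintro ⟨m, hm⟩
  exact hD ⟨m, by rw [hm]; ring⟩

theorem exists_span_intCast_omega_mul_eq_one (ha' : a' = -(a * c))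
    (hprim : Int.gcd a (Int.gcd b c : ℤ) = 1) (ha : a ≠ 0) :
    ∃ J : Submodule (castToRat a' b).range (QuadraticAlgebra ℚ a' b),
      Submodule.span (castToRat a' b).range {(a : QuadraticAlgebra ℚ a' b), ω} * J = 1 := by
  -- `τ = (b - ω) / a`
  set τ : QuadraticAlgebra ℚ a' b := ⟨b / a, -1 / a⟩
  refine ⟨Submodule.span (castToRat a' b).range {1, τ}, ?_⟩
  have haQ : (a : ℚ) ≠ 0 := Int.cast_ne_zero.mpr ha
  have haτ : (a : QuadraticAlgebra ℚ a' b) * τ = (b : QuadraticAlgebra ℚ a' b) - ω := by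
    ext <;> simp [τ] <;> field_simp
  have hωτ : (ω : QuadraticAlgebra ℚ a' b) * τ = c := by
    ext
    · simp [τ, omega_mul_mk, ha']
      field_simp
    · simp [τ, omega_mul_mk]
      ring
  have hmem_one {x} (hx : x ∈ (castToRat a' b).range) :
      x ∈ (1 : Submodule (castToRat a' b).range (QuadraticAlgebra ℚ a' b)) :=
    Submodule.mem_one.mpr ⟨⟨x, hx⟩, rfl⟩
  apply le_antisymm
  · rw [Submodule.span_mul_span, Submodule.span_le]
    rintro _ ⟨s, hs, t, ht, rfl⟩
    rcases hs with rfl | rfl <;> rcases ht with rfl | rfl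
    · exact hmem_one ⟨a, by simp⟩
    · exact hmem_one ⟨(b : QuadraticAlgebra ℤ a' b) - ω, by simp [haτ]⟩
    · exact hmem_one ⟨ω, by simp⟩
    · exact hmem_one ⟨c, by simp [hωτ]⟩
  · rw [Submodule.one_le]
    have hmem {s t} (hs : s ∈ ({(a : QuadraticAlgebra ℚ a' b), ω} : Set _))
        (ht : t ∈ ({1, τ} : Set _)) :
        s * t ∈ Submodule.span (castToRat a' b).range {(a : QuadraticAlgebra ℚ a' b), ω} *
          Submodule.span (castToRat a' b).range {1, τ} :=
      Submodule.mul_mem_mul (Submodule.subset_span hs) (Submodule.subset_span ht)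
    refine one_mem_of_intCast_mem_of_gcd_eq_one hprim ?_ ?_ ?_
    · simpa using hmem (s := a) (t := 1) (by simp) (by simp)
    · simpa [haτ] using add_mem (hmem (s := a) (t := τ) (by simp) (by simp))
        (hmem (s := ω) (t := 1) (by simp) (by simp))
    · simpa [hωτ] using hmem (s := ω) (t := τ) (by simp) (by simp)

theorem algebra_norm_intCast_mul_add_intCast_mul_omega (ha' : a' = -(a * c)) (x y : ℤ) :
    Algebra.norm ℚ ((x : QuadraticAlgebra ℚ a' b) * (a : QuadraticAlgebra ℚ a' b) +
      (y : QuadraticAlgebra ℚ a' b) * ω) =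
      a * (a * x ^ 2 + b * x * y + c * y ^ 2 : ℤ) := by
  rw [algebra_norm_eq_norm, norm_def]
  simp [ha']
  ring

end Form

end QuadraticAlgebra

open QuadraticAlgebra in
/-- **Correspondence between primitive binary quadratic forms and invertible ideals of orders
in quadratic fields.** A primitive non-degenerate binary quadratic form `F` is, up to a sign
`ε` and the factor `#(𝒪/𝔠)`, the norm form of a `ℤ`-basis of an invertible ideal `𝔠` of an
order `𝒪` in the quadratic field `ℚ(√D_F)`. -/
theorem quadratic_form_is_ideal_norm_form
    (a b c : ℤ) (hprim : Int.gcd a (Int.gcd b c : ℤ) = 1)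
    (hD : ¬∃ m : ℤ, b ^ 2 - 4 * a * c = m ^ 2) :
    ∃ (K : Type) (fK : Field K) (nK : @NumberField K fK),
      @IsQuadFormIdealNormRepresentation a b c K fK nK := by
  have ha : a ≠ 0 := by
    rintro rfl
    exact hD ⟨b, by ring⟩
  obtain ⟨a', ha'⟩ : ∃ a' : ℤ, a' = -(a * c) := ⟨_, rfl⟩
  have hdvd : a ∣ a' := ⟨-c, by rw [ha']; ring⟩
  have : Fact (∀ r : ℚ, r ^ 2 ≠ a' + b * r) := ⟨sq_ne_add_mul_of_not_exists_sq ha' hD⟩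
  refine ⟨QuadraticAlgebra ℚ a' b, inferInstance, inferInstance, finrank_eq_two _ _,
    ⟨2 * ω - (b : QuadraticAlgebra ℚ a' b), by ext <;> simp [sq, ha'] <;> ring⟩,
    (castToRat a' b).range, inferInstance, finrank_range_castToRat, _,
    coe_span_intCast_omega_subset_range hdvd, exists_span_intCast_omega_mul_eq_one ha' hprim ha,
    a, ω, Submodule.subset_span (by simp), Submodule.subset_span (by simp),
    fun z hz => existsUnique_zsmul_add_zsmul_of_mem_span_intCast_omega hdvd ha hz, a.sign,
    Int.isUnit_iff.mp (Int.isUnit_iff_natAbs_eq.mpr (Int.natAbs_sign_of_ne_zero ha)),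
    fun x y => ?_⟩
  have hsign : (a.sign * a.natAbs : ℚ) = a := by
    rw [← Int.cast_natCast, ← Int.cast_mul, Int.sign_mul_natAbs]
  rw [card_quotient_comap_span_intCast_omega hdvd, hsign]
  exact algebra_norm_intCast_mul_add_intCast_mul_omega ha' x y
end

section
/- Let K be a number field, let 𝒪 be an order in K, let 𝔠 be an invertible fractional ideal of 𝒪 and let 𝔡 ⊆ 𝒪 be a nonzero ideal. Then the quotient 𝒪-module 𝔠/(𝔠·𝔡) is isomorphic, as an 𝒪-module, to 𝒪/𝔡; in particular 𝔠/(𝔠·𝔡) is generated by a single element. -/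
/-! Since `𝔡` lies in only finitely many maximal ideals `𝔪`, an avoidance argument gives
`x ∈ 𝔠` outside every `𝔠𝔪`. The ideal `𝔠⁻¹(𝒪x + 𝔠𝔡)` contains `𝔡` and, as `x ∉ 𝔠𝔪`, lies in
no maximal ideal containing `𝔡`, so it is `𝒪` and `𝒪x + 𝔠𝔡 = 𝔠`. Thus `𝔠/𝔠𝔡` is cyclic,
generated by the class of `x`, and cancelling `𝔠` in `𝔠·a ⊆ 𝔠𝔡` shows that the annihilator of
that class is `𝔡`. -/

namespace Submodule

lemma span_singleton_mkQ_eq_top {R M : Type*} [Ring R] [AddCommGroup M] [Module R M]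
    {I P : Submodule R M} {x : M} (hx : x ∈ I) (h : R ∙ x ⊔ P = I) :
    R ∙ (comap I.subtype P).mkQ ⟨x, hx⟩ = ⊤ := by
  rw [← Set.image_singleton, ← map_span, map_mkQ_eq_top, sup_comm]
  apply map_injective_of_injective I.injective_subtype
  rw [map_sup, map_subtype_span_singleton, map_comap_subtype, map_subtype_top,
    inf_eq_right.mpr (h ▸ le_sup_right : P ≤ I)]
  exact h

variable {R A : Type*} [CommRing R] [CommRing A] [Algebra R A]

lemma map_algebraLinearMap_le_one (d : Ideal R) : map (Algebra.linearMap R A) d ≤ 1 :=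
  one_eq_range (R := R) (A := A) ▸ LinearMap.map_le_range

lemma mul_map_algebraLinearMap_le (I : Submodule R A) (d : Ideal R) :
    I * map (Algebra.linearMap R A) d ≤ I :=
  mul_le_of_le_one_right' (map_algebraLinearMap_le_one d)

lemma exists_isMaximal_le_map_of_le_one {N : Submodule R A} (hN : N ≤ 1) (hN1 : ¬ 1 ≤ N) :
    ∃ m : Ideal R, m.IsMaximal ∧ N ≤ map (Algebra.linearMap R A) m := by
  rw [one_eq_range] at hN hN1
  have hc : comap (Algebra.linearMap R A) N ≠ ⊤ := fun h => hN1 <| by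
    rw [← map_comap_eq_of_le hN, h, map_top]
  obtain ⟨m, hm, hcm⟩ := Ideal.exists_le_maximal _ hc
  exact ⟨m, hm, map_comap_eq_of_le hN ▸ map_mono hcm⟩

variable [FaithfulSMul R A]

lemma map_algebraLinearMap_le_map_iff {c d : Ideal R} :
    map (Algebra.linearMap R A) c ≤ map (Algebra.linearMap R A) d ↔ c ≤ d :=
  map_le_map_iff_of_injective (FaithfulSMul.algebraMap_injective R A) c d

lemma algebraMap_mem_map_algebraLinearMap_iff {a : R} {d : Ideal R} :
    algebraMap R A a ∈ map (Algebra.linearMap R A) d ↔ a ∈ d :=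
  (FaithfulSMul.algebraMap_injective R A).mem_set_image

variable {I : Submodule R A} (hI : IsUnit I)
include hI

lemma exists_mem_forall_notMem_mul_map (s : Finset (Ideal R)) (hs : ∀ m ∈ s, m.IsMaximal) :
    ∃ x ∈ I, ∀ m ∈ s, x ∉ I * map (Algebra.linearMap R A) m := by
  classical
  induction s using Finset.induction_on with
  | empty => exact ⟨0, I.zero_mem, by simp⟩
  | @insert m' s hm's ih =>
    obtain ⟨x, hxI, hx⟩ := ih fun m hm => hs m (Finset.mem_insert_of_mem hm)
    have hm' : m'.IsMaximal := hs m' (Finset.mem_insert_self _ _)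
    -- An element of `I * ∏ s` outside `I * m'` may be added to `x` without spoiling `hx`.
    have hprod : ¬ I * map (Algebra.linearMap R A) (s.prod id) ≤
        I * map (Algebra.linearMap R A) m' := by
      rw [hI.mul_le_mul_left, map_algebraLinearMap_le_map_iff, hm'.isPrime.prod_le]
      rintro ⟨m, hm, hmm'⟩
      exact hm's ((hs m (Finset.mem_insert_of_mem hm)).eq_of_le hm'.ne_top hmm' ▸ hm)
    obtain ⟨y, hy, hym'⟩ := SetLike.not_le_iff_exists.mp hprod
    have hys : ∀ m ∈ s, y ∈ I * map (Algebra.linearMap R A) m := fun m hm =>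
      have hsm : s.prod id ≤ m := Ideal.prod_le_inf.trans (Finset.inf_le (f := id) hm)
      mul_le_mul_right (map_mono hsm) I hy
    by_cases hxm' : x ∈ I * map (Algebra.linearMap R A) m'
    · refine ⟨x + y, I.add_mem hxI (mul_map_algebraLinearMap_le I _ hy), ?_⟩
      rintro m hm hxy
      rcases Finset.mem_insert.mp hm with rfl | hm
      · exact hym' ((Submodule.add_mem_iff_right _ hxm').mp hxy)
      · exact hx m hm ((Submodule.add_mem_iff_left _ (hys m hm)).mp hxy)
    · refine ⟨x, hxI, fun m hm => ?_⟩
      rcases Finset.mem_insert.mp hm with rfl | hm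
      exacts [hxm', hx m hm]

lemma exists_span_singleton_sup_mul_map_eq {d : Ideal R}
    (hfin : {m : Ideal R | m.IsMaximal ∧ d ≤ m}.Finite) :
    ∃ x ∈ I, R ∙ x ⊔ I * map (Algebra.linearMap R A) d = I := by
  obtain ⟨J, hIJ⟩ := hI.exists_right_inv
  have hJI : J * I = 1 := mul_comm J I ▸ hIJ
  obtain ⟨x, hxI, hx⟩ := exists_mem_forall_notMem_mul_map hI hfin.toFinset
    fun m hm => (hfin.mem_toFinset.mp hm).1
  set C := R ∙ x ⊔ I * map (Algebra.linearMap R A) d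
  have hCI : C ≤ I := sup_le ((span_singleton_le_iff_mem _ _).mpr hxI)
    (mul_map_algebraLinearMap_le I d)
  refine ⟨x, hxI, hCI.antisymm ?_⟩
  suffices 1 ≤ J * C by simpa [← mul_assoc, hIJ] using mul_le_mul_right this I
  by_contra hJC
  obtain ⟨m, hm, hJCm⟩ := exists_isMaximal_le_map_of_le_one (hJI ▸ mul_le_mul_right hCI J) hJC
  have hdm : d ≤ m := by
    rw [← map_algebraLinearMap_le_map_iff (A := A)]
    calc map (Algebra.linearMap R A) d = J * (I * map (Algebra.linearMap R A) d) := by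
          rw [← mul_assoc, hJI, one_mul]
      _ ≤ J * C := mul_le_mul_right le_sup_right J
      _ ≤ _ := hJCm
  refine hx m (hfin.mem_toFinset.mpr ⟨hm, hdm⟩) ?_
  have hCm : C ≤ I * map (Algebra.linearMap R A) m := by
    calc C = I * (J * C) := by rw [← mul_assoc, hIJ, one_mul]
      _ ≤ _ := mul_le_mul_right hJCm I
  exact hCm (le_sup_left (a := R ∙ x) (mem_span_singleton_self x))

lemma smul_mem_mul_map_iff {d : Ideal R} {x : A}
    (hx : R ∙ x ⊔ I * map (Algebra.linearMap R A) d = I) (a : R) :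
    a • x ∈ I * map (Algebra.linearMap R A) d ↔ a ∈ d := by
  refine ⟨fun hax => ?_, fun ha => ?_⟩
  · rw [← algebraMap_mem_map_algebraLinearMap_iff (A := A), ← span_singleton_le_iff_mem,
      ← hI.mul_le_mul_left]
    have hy1 : R ∙ algebraMap R A a ≤ 1 := (span_singleton_le_iff_mem _ _).mpr (algebraMap_mem a)
    calc I * (R ∙ algebraMap R A a)
        = (R ∙ x ⊔ I * map (Algebra.linearMap R A) d) * (R ∙ algebraMap R A a) := by rw [hx]
      _ = R ∙ (a • x) ⊔ I * map (Algebra.linearMap R A) d * (R ∙ algebraMap R A a) := by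
          rw [sup_mul, span_mul_span, Set.singleton_mul_singleton, Algebra.smul_def, mul_comm x]
      _ ≤ I * map (Algebra.linearMap R A) d :=
          sup_le ((span_singleton_le_iff_mem _ _).mpr hax) (mul_le_of_le_one_right' hy1)
  · rw [Algebra.smul_def, mul_comm (algebraMap R A a)]
    exact mul_mem_mul (hx.le (mem_sup_left (mem_span_singleton_self x))) (mem_map_of_mem ha)

lemma exists_span_singleton_eq_top_and_torsionOf_eq {d : Ideal R}
    (hfin : {m : Ideal R | m.IsMaximal ∧ d ≤ m}.Finite) :
    ∃ g : I ⧸ comap I.subtype (I * map (Algebra.linearMap R A) d),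
      R ∙ g = ⊤ ∧ Ideal.torsionOf R _ g = d := by
  obtain ⟨x, hxI, hx⟩ := exists_span_singleton_sup_mul_map_eq hI hfin
  refine ⟨mkQ _ ⟨x, hxI⟩, span_singleton_mkQ_eq_top hxI hx, ?_⟩
  ext a
  rw [Ideal.mem_torsionOf_iff, ← map_smul, mkQ_apply, Quotient.mk_eq_zero, mem_comap]
  exact smul_mem_mul_map_iff hI hx a

end Submodule

lemma Ideal.finite_setOf_le_of_finite_quotient {R : Type*} [CommRing R] (d : Ideal R)
    [Finite (R ⧸ d)] : {m : Ideal R | d ≤ m}.Finite :=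
  (Set.finite_range (Ideal.comap (Ideal.Quotient.mk d))).subset fun _ hm =>
    ⟨_, Ideal.comap_map_mk hm⟩

lemma Ideal.nonempty_linearEquiv_quotient_of_span_singleton_eq_top {R M : Type*} [Ring R]
    [AddCommGroup M] [Module R M] {g : M} (hg : R ∙ g = ⊤) {d : Ideal R}
    (hgd : Ideal.torsionOf R M g = d) : Nonempty (M ≃ₗ[R] R ⧸ d) :=
  hgd ▸ ⟨((Ideal.quotTorsionOfEquivSpanSingleton R M g).trans (LinearEquiv.ofTop _ hg)).symm⟩

/-- **Quotients of invertible fractional ideals of orders.** If `𝒪` is an order in a number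
field `K`, `𝔠` an invertible fractional ideal of `𝒪` and `𝔡 ⊆ 𝒪` a nonzero ideal, then
`𝔠/(𝔠·𝔡)` is isomorphic to `𝒪/𝔡` as an `𝒪`-module; in particular it is generated by a
single element. -/
theorem invertible_ideal_quotient_iso
    (K : Type*) [Field K] [NumberField K]
    (O : Subalgebra ℤ K) (hfree : Module.Free ℤ O)
    (hrank : Module.finrank ℤ O = Module.finrank ℚ K)
    (I : Submodule O K) (hinv : ∃ J : Submodule O K, I * J = 1)
    (d : Ideal O) (hd : d ≠ ⊥) :
    Nonempty
      ((↥I ⧸ Submodule.comap I.subtype (I * Submodule.map (Algebra.linearMap O K) d))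
        ≃ₗ[O] (O ⧸ d)) ∧
    ∃ g : ↥I ⧸ Submodule.comap I.subtype (I * Submodule.map (Algebra.linearMap O K) d),
      Submodule.span O {g} = ⊤ := by
  obtain ⟨J, hIJ⟩ := hinv
  have := hfree
  have : Module.Finite ℤ O := Module.finite_of_finrank_pos (hrank ▸ Module.finrank_pos)
  have : Finite (O ⧸ d) := Ideal.finiteQuotientOfFreeOfNeBot d hd
  obtain ⟨g, hg, hgd⟩ := Submodule.exists_span_singleton_eq_top_and_torsionOf_eq
    (IsUnit.of_mul_eq_one J hIJ)
    ((Ideal.finite_setOf_le_of_finite_quotient d).subset fun _ hm => hm.2)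
  exact ⟨Ideal.nonempty_linearEquiv_quotient_of_span_singleton_eq_top hg hgd, g, hg⟩
end
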